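/- In the rewrite game over {a,b} with rules a → ε, a^2 → ε, a^3 → ε, b → ε, decompose w = a^{i_0} b a^{i_1} b ⋯ b a^{i_k} and set S(w) = ((k + α_1) mod 2, α_2 mod 2, α_3 mod 2) ∈ {0,1}^3, where α_r = #{ j : i_j ≡ r (mod 4) }. Then the Grundy value of w is 0 if S(w) ∈ {(0,0,0),(1,1,1)}, 1 if S(w) ∈ {(0,1,1),(1,0,0)}, 2 if S(w) ∈ {(0,1,0),(1,0,1)}, and 3 if S(w) ∈ {(0,0,1),(1,1,0)}. -/

import Mathlib

/-!
Write `w = a^{i_0} b ⋯ b a^{i_k}`. A move either shortens one block by 1, 2 or 3, or deletes a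
`b` and merges two neighbouring blocks. The Grundy value is the nim-sum
`(i_0 mod 4) ⊕ ⋯ ⊕ (i_k mod 4) ⊕ (k mod 2)`. Shortening a block changes its residue; merging
flips `k mod 2` but changes the residues only by the carry `(m mod 4) ⊕ (n mod 4) ⊕ ((m + n) mod 4)`,
which is even. Conversely, as in Nim, a smaller value is reached by lowering one residue, unless
only the parity term must flip: then remove one `a` from a block of odd length, or, if all blocks
are even, merge two of them, which for even residues adds them without carry. The two bits of the
nim-sum are `k + α₁ + α₃` and `α₂ + α₃` mod 2, which gives the table.
-/

inductive AB | a | b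
deriving DecidableEq

/-- One move of the game `{a → ε, a² → ε, a³ → ε, b → ε}`. -/
def Step (w w' : List AB) : Prop :=
  ∃ x y : List AB, w' = x ++ y ∧
    (w = x ++ [AB.a] ++ y ∨ w = x ++ [AB.a, AB.a] ++ y ∨
     w = x ++ [AB.a, AB.a, AB.a] ++ y ∨ w = x ++ [AB.b] ++ y)

/-- The minimum excluded value of a set of naturals. -/
noncomputable def mex (S : Set ℕ) : ℕ := sInf {n | n ∉ S}

/-- `g` is the Grundy function of the game with moves `step`. -/
def IsGrundy (step : List AB → List AB → Prop) (g : List AB → ℕ) : Prop :=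
  ∀ w, g w = mex (g '' {w' | step w w'})

/-- The lengths `i_0, …, i_k` of the (possibly empty) maximal blocks of `a`'s in
the decomposition `w = a^{i_0} b a^{i_1} b ⋯ b a^{i_k}`. -/
def blocks (w : List AB) : List ℕ := (w.splitOn AB.b).map List.length

/-- `α_r`: the number of blocks of `a`'s whose length is `≡ r (mod 4)`. -/
def alpha (w : List AB) (r : ℕ) : ℕ := (blocks w).countP (fun i => i % 4 == r)

/-- `S(w) = ((k + α₁) mod 2, α₂ mod 2, α₃ mod 2)`, where `k = |w|_b`. -/
def S (w : List AB) : ZMod 2 × ZMod 2 × ZMod 2 :=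
  (((w.count AB.b + alpha w 1 : ℕ) : ZMod 2),
   ((alpha w 2 : ℕ) : ZMod 2), ((alpha w 3 : ℕ) : ZMod 2))

theorem blocks_cons_a (w : List AB) : blocks (AB.a :: w) = (blocks w).modifyHead (· + 1) := by
  unfold blocks
  rw [List.splitOn_cons_eq_if_modifyHead, if_neg (by decide)]
  cases w.splitOn AB.b <;> simp

theorem blocks_cons_b (w : List AB) : blocks (AB.b :: w) = 0 :: blocks w := by
  simp [blocks, List.splitOn_cons_eq_if_modifyHead]

theorem blocks_ne_nil (w : List AB) : blocks w ≠ [] := by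
  simp [blocks]

theorem length_blocks (w : List AB) : (blocks w).length = w.count AB.b + 1 := by
  induction w with
  | nil => rfl
  | cons c w ih => cases c <;> simp [blocks_cons_a, blocks_cons_b, ih]

def ofBlocks (L : List ℕ) : List AB := [AB.b].intercalate (L.map (List.replicate · AB.a))

theorem blocks_ofBlocks {L : List ℕ} (hL : L ≠ []) : blocks (ofBlocks L) = L := by
  rw [blocks, ofBlocks, List.splitOn_intercalate _ _ (by simpa using hL)]
  · simp [Function.comp_def]
  · simp [List.mem_replicate]

theorem ofBlocks_blocks (w : List AB) : ofBlocks (blocks w) = w := by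
  induction w with
  | nil => rfl
  | cons c w ih =>
    obtain ⟨h, L, hw⟩ := List.exists_cons_of_ne_nil (blocks_ne_nil w)
    rw [hw] at ih
    cases c with
    | a => simpa [blocks_cons_a, hw, ofBlocks, List.replicate_succ] using ih
    | b =>
      rw [blocks_cons_b, hw]
      simpa [ofBlocks, List.replicate_succ] using ih

theorem ofBlocks_append_cons (p : List ℕ) (n : ℕ) (s : List ℕ) :
    ofBlocks (p ++ n :: s) = (p.map (List.replicate · AB.a ++ [AB.b])).flatten ++
      List.replicate n AB.a ++ (s.map (AB.b :: List.replicate · AB.a)).flatten := by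
  induction p with
  | nil =>
    induction s generalizing n with
    | nil => simp [ofBlocks]
    | cons j s ih => simp_all [ofBlocks]
  | cons j p ih =>
    rw [List.cons_append, ofBlocks, List.map_cons, List.intercalate_cons_of_ne_nil (by simp),
      ← ofBlocks, ih]
    simp

inductive BlockMove : List ℕ → List ℕ → Prop
  | shorten (p s : List ℕ) (n : ℕ) {d : ℕ} (hd : d ∈ [1, 2, 3]) :
      BlockMove (p ++ (n + d) :: s) (p ++ n :: s)
  | merge (p s : List ℕ) (m n : ℕ) : BlockMove (p ++ m :: n :: s) (p ++ (m + n) :: s)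

theorem exists_ofBlocks_eq_append (x y : List AB) : ∃ p q h s,
    x ++ AB.b :: y = ofBlocks (p ++ q :: h :: s) ∧
    ∀ n, x ++ List.replicate n AB.a ++ y = ofBlocks (p ++ (q + n + h) :: s) := by
  obtain ⟨p, q, hx⟩ := (List.eq_nil_or_concat (blocks x)).resolve_left (blocks_ne_nil x)
  obtain ⟨h, s, hy⟩ := List.exists_cons_of_ne_nil (blocks_ne_nil y)
  have hx' := ofBlocks_blocks x
  have hy' := ofBlocks_blocks y
  rw [hx, List.concat_eq_append, ofBlocks_append_cons] at hx'
  rw [hy, ← List.nil_append (h :: s), ofBlocks_append_cons] at hy'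
  refine ⟨p, q, h, s, ?_, fun n => ?_⟩
  · rw [← hx', ← hy', ofBlocks_append_cons]
    simp
  · rw [← hx', ← hy', ofBlocks_append_cons]
    simp only [List.map_nil, List.flatten_nil, List.append_nil, List.nil_append,
      List.replicate_add, List.append_assoc]

theorem Step.blockMove {w w' : List AB} (h : Step w w') : BlockMove (blocks w) (blocks w') := by
  obtain ⟨x, y, rfl, hw⟩ := h
  obtain ⟨p, q, h, s, hb, ha⟩ := exists_ofBlocks_eq_append x y
  have hxy : blocks (x ++ y) = p ++ (q + h) :: s := by
    simpa [blocks_ofBlocks] using congrArg blocks (ha 0)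
  have hshorten {d} (hd : d ∈ [1, 2, 3]) (hw : w = x ++ List.replicate d AB.a ++ y) :
      BlockMove (blocks w) (blocks (x ++ y)) := by
    rw [hxy, hw, ha, blocks_ofBlocks (by simp), add_right_comm]
    exact BlockMove.shorten p s (q + h) hd
  rcases hw with rfl | rfl | rfl | rfl
  · exact hshorten (d := 1) (by simp) rfl
  · exact hshorten (d := 2) (by simp) rfl
  · exact hshorten (d := 3) (by simp) rfl
  · simpa [hb, hxy, blocks_ofBlocks] using BlockMove.merge p s q h

theorem BlockMove.exists_step {w : List AB} {L' : List ℕ} (h : BlockMove (blocks w) L') :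
    ∃ w', Step w w' ∧ blocks w' = L' := by
  rw [← ofBlocks_blocks w]
  generalize blocks w = L at h
  cases h with
  | shorten p s n hd =>
    refine ⟨ofBlocks (p ++ n :: s), ?_, blocks_ofBlocks (by simp)⟩
    refine ⟨_ ++ List.replicate n AB.a, _, ofBlocks_append_cons p n s, ?_⟩
    simp only [List.mem_cons, List.not_mem_nil, or_false] at hd
    rw [ofBlocks_append_cons, List.replicate_add]
    rcases hd with rfl | rfl | rfl
    · exact Or.inl (by simp only [List.append_assoc]; rfl)
    · exact Or.inr (Or.inl (by simp only [List.append_assoc]; rfl))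
    · exact Or.inr (Or.inr (Or.inl (by simp only [List.append_assoc]; rfl)))
  | merge p s m n =>
    refine ⟨ofBlocks (p ++ (m + n) :: s), ?_, blocks_ofBlocks (by simp)⟩
    refine ⟨(p.map (List.replicate · AB.a ++ [AB.b])).flatten ++ List.replicate m AB.a,
      List.replicate n AB.a ++ (s.map (AB.b :: List.replicate · AB.a)).flatten, ?_, ?_⟩
    · simp only [ofBlocks_append_cons, List.replicate_add, List.append_assoc]
    · simp [ofBlocks_append_cons]

def nimSum (l : List ℕ) : ℕ := l.foldr (· ^^^ ·) 0

@[simp] theorem nimSum_nil : nimSum [] = 0 := rfl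

@[simp] theorem nimSum_cons (r : ℕ) (l : List ℕ) : nimSum (r :: l) = r ^^^ nimSum l := rfl

@[simp] theorem nimSum_append (l₁ l₂ : List ℕ) : nimSum (l₁ ++ l₂) = nimSum l₁ ^^^ nimSum l₂ := by
  induction l₁ with
  | nil => simp
  | cons r l ih => simp [ih, Nat.xor_assoc]

theorem nimSum_mod_two (l : List ℕ) : nimSum l % 2 = l.sum % 2 := by
  induction l with
  | nil => rfl
  | cons r l ih => simp [Nat.xor_mod_two_eq, Nat.add_mod, ih]

theorem nimSum_div_two (l : List ℕ) : nimSum l / 2 = nimSum (l.map (· / 2)) := by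
  induction l with
  | nil => rfl
  | cons r l ih => simp [Nat.xor_div_two, ih]

theorem nimSum_lt_two_pow {l : List ℕ} {n : ℕ} (h : ∀ r ∈ l, r < 2 ^ n) : nimSum l < 2 ^ n := by
  induction l with
  | nil => simp
  | cons r l ih => simp_all [Nat.xor_lt_two_pow]

-- Bouton's lemma: a smaller nim-sum is reached by lowering a single summand.
theorem exists_mem_xor_lt_of_lt_nimSum {t : ℕ} {l : List ℕ} (h : t < nimSum l) :
    ∃ r ∈ l, t ^^^ nimSum l ^^^ r < r := by
  induction l generalizing t with
  | nil => simp at h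
  | cons r l ih =>
    rw [nimSum_cons] at h
    rcases Nat.lt_xor_cases h with h | h
    · exact ⟨r, by simp, by simpa [Nat.xor_comm, Nat.xor_left_comm] using h⟩
    · obtain ⟨r', hr', hlt⟩ := ih h
      exact ⟨r', by simp [hr'], by simpa [Nat.xor_comm, Nat.xor_left_comm] using hlt⟩

-- `L` has `k + 1` entries, so the last summand is `k mod 2`.
def blockValue (L : List ℕ) : ℕ := nimSum (L.map (· % 4)) ^^^ (L.length + 1) % 2

theorem blockValue_append_cons (p : List ℕ) (n : ℕ) (s : List ℕ) :
    blockValue (p ++ n :: s) = nimSum (p.map (· % 4)) ^^^ n % 4 ^^^ nimSum (s.map (· % 4)) ^^^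
      (p.length + s.length) % 2 := by
  simp only [blockValue, List.map_append, List.map_cons, nimSum_append, nimSum_cons,
    List.length_append, List.length_cons, Nat.xor_assoc]
  congr 3
  omega

theorem blockValue_mod_two (L : List ℕ) :
    blockValue L % 2 = ((L.map (· % 4)).sum + L.length + 1) % 2 := by
  have := nimSum_mod_two (L.map (· % 4))
  rw [blockValue, Nat.xor_mod_two_eq]
  omega

theorem BlockMove.blockValue_ne {L L' : List ℕ} (h : BlockMove L L') :
    blockValue L' ≠ blockValue L := by
  intro heq
  cases h with
  | @shorten p s n d hd =>
    have : n % 4 = (n + d) % 4 := by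
      simpa [blockValue_append_cons, Nat.xor_comm, Nat.xor_left_comm] using heq
    simp only [List.mem_cons, List.not_mem_nil, or_false] at hd
    omega
  | merge p s m n =>
    have := congrArg (· % 2) heq
    simp only [blockValue_mod_two, List.map_append, List.map_cons, List.sum_append,
      List.sum_cons, List.length_append, List.length_cons] at this
    omega

theorem exists_blockMove_mod_four_eq (p s : List ℕ) {i r : ℕ} (hr : r < i % 4) :
    ∃ n, n % 4 = r ∧ BlockMove (p ++ i :: s) (p ++ n :: s) := by
  have h := BlockMove.shorten p s (i - (i % 4 - r)) (d := i % 4 - r)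
    (by simp only [List.mem_cons, List.not_mem_nil, or_false]; omega)
  rw [Nat.sub_add_cancel (by omega)] at h
  exact ⟨_, by omega, h⟩

theorem exists_blockMove_blockValue_eq_nimSum {L : List ℕ} (hL : L ≠ [])
    (hP : (L.length + 1) % 2 = 1) :
    ∃ L', BlockMove L L' ∧ blockValue L' = nimSum (L.map (· % 4)) := by
  by_cases hodd : ∃ i ∈ L, i % 2 = 1
  · obtain ⟨i, hi, hodd⟩ := hodd
    obtain ⟨p, s, rfl⟩ := List.append_of_mem hi
    obtain ⟨n, hn, hmove⟩ := exists_blockMove_mod_four_eq p s (i := i) (r := i % 4 ^^^ 1) (by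
      rcases (by omega : i % 4 = 1 ∨ i % 4 = 3) with h | h <;> simp [h])
    have hP' : (p.length + s.length) % 2 = 1 := by
      simp only [List.length_append, List.length_cons] at hP; omega
    refine ⟨_, hmove, ?_⟩
    simp [blockValue_append_cons, hn, hP', Nat.xor_assoc, Nat.xor_comm, Nat.xor_left_comm]
  · push Not at hodd
    obtain ⟨i, j, t, rfl⟩ : ∃ i j t, L = i :: j :: t := by
      match L, hL, hP with
      | [_], _, hP => simp at hP
      | i :: j :: t, _, _ => exact ⟨i, j, t, rfl⟩
    have hij : (i + j) % 4 = i % 4 ^^^ j % 4 := by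
      have hi := hodd i (by simp)
      have hj := hodd j (by simp)
      rcases (by omega : i % 4 = 0 ∨ i % 4 = 2) with h₁ | h₁ <;>
        rcases (by omega : j % 4 = 0 ∨ j % 4 = 2) with h₂ | h₂ <;> simp [Nat.add_mod, h₁, h₂]
    have ht : (t.length + 1 + 1) % 2 = 0 := by simp only [List.length_cons] at hP; omega
    refine ⟨(i + j) :: t, BlockMove.merge [] t i j, ?_⟩
    simp [blockValue, hij, ht, Nat.xor_assoc]

theorem exists_blockMove_blockValue_eq {L : List ℕ} (hL : L ≠ []) {m : ℕ}
    (hm : m < blockValue L) : ∃ L', BlockMove L L' ∧ blockValue L' = m := by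
  rcases Nat.lt_xor_cases hm with h | h
  · obtain ⟨r, hr, hlt⟩ := exists_mem_xor_lt_of_lt_nimSum h
    obtain ⟨i, hi, rfl⟩ := List.mem_map.1 hr
    obtain ⟨p, s, rfl⟩ := List.append_of_mem hi
    obtain ⟨n, hn, hmove⟩ := exists_blockMove_mod_four_eq p s hlt
    have hP : ((p ++ i :: s).length + 1) % 2 = (p.length + s.length) % 2 := by
      simp only [List.length_append, List.length_cons]; omega
    rw [hP] at hn
    refine ⟨_, hmove, ?_⟩
    simp [blockValue_append_cons, hn, Nat.xor_comm, Nat.xor_left_comm]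
  · have hP : (L.length + 1) % 2 = 1 := by omega
    rw [hP, Nat.lt_one_iff, xor_eq_zero_iff] at h
    exact h ▸ exists_blockMove_blockValue_eq_nimSum hL hP

theorem Step.length_lt {w w' : List AB} (h : Step w w') : w'.length < w.length := by
  obtain ⟨x, y, rfl, hw⟩ := h
  rcases hw with rfl | rfl | rfl | rfl <;>
    simp only [List.length_append, List.length_cons, List.length_nil] <;> omega

theorem mex_eq_of_forall_lt_mem {T : Set ℕ} {x : ℕ} (hx : x ∉ T) (h : ∀ m < x, m ∈ T) :
    mex T = x :=
  le_antisymm (Nat.sInf_le hx) (le_csInf ⟨x, hx⟩ fun _ hn => not_lt.1 fun hlt => hn (h _ hlt))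

theorem IsGrundy.eq_blockValue {g : List AB → ℕ} (hg : IsGrundy Step g) (w : List AB) :
    g w = blockValue (blocks w) := by
  have ih (w') (h : Step w w') : g w' = blockValue (blocks w') :=
    have := h.length_lt
    hg.eq_blockValue w'
  rw [hg w]
  apply mex_eq_of_forall_lt_mem
  · rintro ⟨w', hw', heq⟩
    exact hw'.blockMove.blockValue_ne ((ih w' hw').symm.trans heq)
  · intro m hm
    obtain ⟨L', hmove, rfl⟩ := exists_blockMove_blockValue_eq (blocks_ne_nil w) hm
    obtain ⟨w', hw', rfl⟩ := hmove.exists_step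
    exact ⟨w', hw', ih w' hw'⟩
termination_by w.length

theorem sum_map_mod_four (L : List ℕ) : (L.map (· % 4)).sum =
    L.countP (· % 4 == 1) + 2 * L.countP (· % 4 == 2) + 3 * L.countP (· % 4 == 3) := by
  induction L with
  | nil => rfl
  | cons i L ih =>
    simp only [List.map_cons, List.sum_cons, List.countP_cons, ih, beq_iff_eq]
    split_ifs <;> omega

theorem sum_map_mod_four_div_two (L : List ℕ) : (L.map (· % 4 / 2)).sum =
    L.countP (· % 4 == 2) + L.countP (· % 4 == 3) := by
  induction L with
  | nil => rfl
  | cons i L ih =>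
    simp only [List.map_cons, List.sum_cons, List.countP_cons, ih, beq_iff_eq]
    split_ifs <;> omega

theorem blockValue_eq_countP (L : List ℕ) : blockValue L =
    (L.length + 1 + L.countP (· % 4 == 1) + L.countP (· % 4 == 3)) % 2 +
      2 * ((L.countP (· % 4 == 2) + L.countP (· % 4 == 3)) % 2) := by
  have hlt : blockValue L < 2 ^ 2 := by
    refine Nat.xor_lt_two_pow (nimSum_lt_two_pow ?_) (by omega)
    simp only [List.mem_map]
    rintro _ ⟨i, -, rfl⟩
    omega
  have hdiv : blockValue L / 2 = nimSum (L.map (· % 4 / 2)) := by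
    rw [blockValue, Nat.xor_div_two, nimSum_div_two, List.map_map]
    simp [Function.comp_def]
  have hbit₀ := blockValue_mod_two L
  have hbit₁ := nimSum_mod_two (L.map (· % 4 / 2))
  rw [sum_map_mod_four] at hbit₀
  rw [sum_map_mod_four_div_two] at hbit₁
  omega

theorem blockValue_blocks (w : List AB) :
    blockValue (blocks w) = ((S w).1 + (S w).2.2).val + 2 * ((S w).2.1 + (S w).2.2).val := by
  simp only [S, ← Nat.cast_add, ZMod.val_natCast, blockValue_eq_countP, length_blocks, alpha]
  omega

theorem stmt12 (g : List AB → ℕ) (hg : IsGrundy Step g) :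
    ∀ w : List AB,
      (S w = (0, 0, 0) ∨ S w = (1, 1, 1) → g w = 0) ∧
      (S w = (0, 1, 1) ∨ S w = (1, 0, 0) → g w = 1) ∧
      (S w = (0, 1, 0) ∨ S w = (1, 0, 1) → g w = 2) ∧
      (S w = (0, 0, 1) ∨ S w = (1, 1, 0) → g w = 3) := by
  intro w
  rw [hg.eq_blockValue, blockValue_blocks]
  generalize S w = σ
  revert σ
  decide
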